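/- arXiv:1405.0368 — 2 statements merged into one kernel-verified Lean document; each statement's English description precedes it below -/
import Mathlib

section
/- Let $p \in (1,\infty)$ and $\gamma, \delta \in \mathbb{C}$. For $x \in \mathbb{R}$ set $x_\gamma = \pi(x + i/p + i\gamma)$, $x_\delta = \pi(x + i/p + i\delta)$, $s_\gamma(x) = \coth(x_\gamma)$, $r_\gamma(x) = 1/\sinh(x_\gamma)$, $p_\gamma^\pm(x) = (1 \pm s_\gamma(x))/2$. Then for all real $x$ with $\sinh(x_\gamma)\neq 0$ and $\sinh(x_\delta)\neq 0$: $p_\gamma^-(x)\, p_\delta^+(x) = -\frac{e^{i\pi(\delta - \gamma)}}{4}\, r_\gamma(x)\, r_\delta(x)$. -/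
open Complex Real

namespace Complex

theorem one_sub_cosh_div_sinh {z : ℂ} (hz : sinh z ≠ 0) :
    1 - cosh z / sinh z = -exp (-z) / sinh z := by
  rw [← cosh_sub_sinh]
  field_simp
  ring

theorem one_add_cosh_div_sinh {z : ℂ} (hz : sinh z ≠ 0) :
    1 + cosh z / sinh z = exp z / sinh z := by
  rw [← cosh_add_sinh]
  field_simp
  ring

theorem one_sub_cosh_div_sinh_mul_one_add_cosh_div_sinh {z w : ℂ}
    (hz : sinh z ≠ 0) (hw : sinh w ≠ 0) :
    ((1 - cosh z / sinh z) / 2) * ((1 + cosh w / sinh w) / 2)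
      = -(exp (w - z) / 4) * (1 / sinh z) * (1 / sinh w) := by
  rw [one_sub_cosh_div_sinh hz, one_add_cosh_div_sinh hw, sub_eq_add_neg, exp_add]
  field_simp
  ring

end Complex

theorem proj_symbol_minus_plus_general (p : ℝ) (γ δ : ℂ) (x : ℝ)
    (xγ : ℂ) (hxγ : xγ = (Real.pi : ℂ) * (x + Complex.I / p + Complex.I * γ))
    (xδ : ℂ) (hxδ : xδ = (Real.pi : ℂ) * (x + Complex.I / p + Complex.I * δ))
    (hγ : Complex.sinh xγ ≠ 0) (hδ : Complex.sinh xδ ≠ 0) :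
    ((1 - Complex.cosh xγ / Complex.sinh xγ) / 2)
      * ((1 + Complex.cosh xδ / Complex.sinh xδ) / 2)
    = -(Complex.exp (Complex.I * (Real.pi : ℂ) * (δ - γ)) / 4)
        * (1 / Complex.sinh xγ) * (1 / Complex.sinh xδ) := by
  have hdiff : Complex.I * (Real.pi : ℂ) * (δ - γ) = xδ - xγ := by
    rw [hxγ, hxδ]
    ring
  rw [hdiff]
  exact Complex.one_sub_cosh_div_sinh_mul_one_add_cosh_div_sinh hγ hδ

theorem proj_symbol_minus_plus (p : ℝ) (hp : 1 < p) (γ δ : ℂ) (x : ℝ)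
    (xγ : ℂ) (hxγ : xγ = (Real.pi : ℂ) * (x + Complex.I / p + Complex.I * γ))
    (xδ : ℂ) (hxδ : xδ = (Real.pi : ℂ) * (x + Complex.I / p + Complex.I * δ))
    (hγ : Complex.sinh xγ ≠ 0) (hδ : Complex.sinh xδ ≠ 0) :
    ((1 - Complex.cosh xγ / Complex.sinh xγ) / 2)
      * ((1 + Complex.cosh xδ / Complex.sinh xδ) / 2)
    = -(Complex.exp (Complex.I * (Real.pi : ℂ) * (δ - γ)) / 4)
        * (1 / Complex.sinh xγ) * (1 / Complex.sinh xδ) :=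
  proj_symbol_minus_plus_general p γ δ x xγ hxγ xδ hxδ hγ hδ
end

section
/- Let $p \in (1,\infty)$, $\gamma \in \mathbb{C}$ with $0 < 1/p + \operatorname{Re}\gamma < 1$, $\omega : \mathbb{R}_+ \to \mathbb{R}$, $t \in \mathbb{R}_+$, $x \in \mathbb{R}$, and $\theta \in [0,1]$. Define $r_\gamma(x) = 1/\sinh[\pi(x+i/p+i\gamma)]$ and $\tilde{\mathfrak{g}}(t,x,\theta) = 1 + \tfrac14[e^{2\pi\operatorname{Im}\gamma}(1 - e^{-i\theta\omega(t)x}) + e^{-2\pi\operatorname{Im}\gamma}(1 - e^{i\theta\omega(t)x})] r_\gamma(x) r_{\bar\gamma}(x)$. Then $\tilde{\mathfrak{g}}(t,x,\theta) = \dfrac{\sinh[\pi(x - \operatorname{Im}\gamma + i/p + i\operatorname{Re}\gamma) + i\theta\omega(t)x/2]}{\sinh[\pi(x - \operatorname{Im}\gamma + i/p + i\operatorname{Re}\gamma)]} \cdot \dfrac{\sinh[\pi(x + \operatorname{Im}\gamma + i/p + i\operatorname{Re}\gamma) - i\theta\omega(t)x/2]}{\sinh[\pi(x + \operatorname{Im}\gamma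 + i/p + i\operatorname{Re}\gamma)]}$. -/
/-!
Put `a = π(x + i/p + iγ)`, `b = π(x + i/p + i γ̄)` and `u = iθω(t)x/2`, so that `b - a = 2π Im γ`.
Expanding in exponentials, `sinh (a + u) sinh (b - u) - sinh a sinh b` is exactly the bracket
`¼[e^{b-a}(1 - e^{-2u}) + e^{a-b}(1 - e^{2u})]`; dividing by `sinh a sinh b` gives the factorization.
The division is legitimate because `Im a = Im b = π(1/p + Re γ) ∈ (0, π)` and
`Im (sinh z) = cosh (Re z) · sin (Im z)`.
-/

open Complex Real

namespace Complex

theorem sinh_im (z : ℂ) : (sinh z).im = Real.cosh z.re * Real.sin z.im := by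
  obtain ⟨x, y, rfl⟩ : ∃ x y : ℝ, z = x + y * I := ⟨_, _, (re_add_im z).symm⟩
  simp [sinh_add, sinh_mul_I, cosh_mul_I, mul_im, sin_ofReal_re, ← ofReal_sinh, ← ofReal_cosh]

theorem sinh_ne_zero_of_im_mem_Ioo {z : ℂ} (hz : z.im ∈ Set.Ioo 0 π) : sinh z ≠ 0 := by
  have him : (sinh z).im ≠ 0 := by
    rw [sinh_im]
    exact (mul_pos (Real.cosh_pos _) (Real.sin_pos_of_pos_of_lt_pi hz.1 hz.2)).ne'
  exact fun h ↦ him (by rw [h, zero_im])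

theorem sinh_add_mul_sinh_sub (a b u : ℂ) :
    sinh (a + u) * sinh (b - u) = sinh a * sinh b
      + (1 / 4) * (exp (b - a) * (1 - exp (-(2 * u))) + exp (a - b) * (1 - exp (2 * u))) := by
  simp only [sinh, exp_add, exp_sub, exp_neg, two_mul]
  field_simp
  ring

theorem one_add_mul_inv_sinh_mul_inv_sinh {a b : ℂ} (ha : sinh a ≠ 0) (hb : sinh b ≠ 0) (u : ℂ) :
    1 + (1 / 4) * (exp (b - a) * (1 - exp (-(2 * u))) + exp (a - b) * (1 - exp (2 * u)))
        * (1 / sinh a) * (1 / sinh b)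
      = (sinh (a + u) / sinh a) * (sinh (b - u) / sinh b) := by
  rw [div_mul_div_comm, sinh_add_mul_sinh_sub]
  field_simp

theorem im_ofReal_pi_mul_add (x p : ℝ) (z : ℂ) :
    ((π : ℂ) * (x + I / p + I * z)).im = π * (1 / p + z.re) := by
  simp [mul_im, div_im]

end Complex

theorem symbol_factorization_general (p : ℝ) (γ : ℂ)
    (h1 : 0 < 1 / p + γ.re) (h2 : 1 / p + γ.re < 1)
    (ω : ℝ → ℝ) (t : ℝ) (x : ℝ) (θ : ℝ) :
    1 + (1 / 4) * (Complex.exp (2 * (Real.pi : ℂ) * γ.im)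
            * (1 - Complex.exp (-(Complex.I * (θ : ℂ) * (ω t : ℂ) * (x : ℂ))))
          + Complex.exp (-(2 * (Real.pi : ℂ) * γ.im))
            * (1 - Complex.exp (Complex.I * (θ : ℂ) * (ω t : ℂ) * (x : ℂ))))
        * (1 / Complex.sinh ((Real.pi : ℂ) * (x + Complex.I / p + Complex.I * γ)))
        * (1 / Complex.sinh ((Real.pi : ℂ) * (x + Complex.I / p + Complex.I * (starRingEnd ℂ γ))))
    = (Complex.sinh ((Real.pi : ℂ) * ((x : ℂ) - (γ.im : ℂ) + Complex.I / p + Complex.I * γ.re)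
          + Complex.I * (θ : ℂ) * (ω t : ℂ) * (x : ℂ) / 2)
        / Complex.sinh ((Real.pi : ℂ) * ((x : ℂ) - (γ.im : ℂ) + Complex.I / p + Complex.I * γ.re)))
      * (Complex.sinh ((Real.pi : ℂ) * ((x : ℂ) + (γ.im : ℂ) + Complex.I / p + Complex.I * γ.re)
          - Complex.I * (θ : ℂ) * (ω t : ℂ) * (x : ℂ) / 2)
        / Complex.sinh ((Real.pi : ℂ) * ((x : ℂ) + (γ.im : ℂ) + Complex.I / p + Complex.I * γ.re))) := by
  set a : ℂ := (π : ℂ) * (x + I / p + I * γ)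
  set b : ℂ := (π : ℂ) * (x + I / p + I * starRingEnd ℂ γ)
  have hIm : π * (1 / p + γ.re) ∈ Set.Ioo 0 π :=
    ⟨mul_pos Real.pi_pos h1, mul_lt_of_lt_one_right Real.pi_pos h2⟩
  have ha : sinh a ≠ 0 := sinh_ne_zero_of_im_mem_Ioo (by rwa [im_ofReal_pi_mul_add])
  have hb : sinh b ≠ 0 := sinh_ne_zero_of_im_mem_Ioo (by rwa [im_ofReal_pi_mul_add, conj_re])
  set u : ℂ := I * θ * ω t * x / 2
  have hu : I * θ * ω t * x = 2 * u := by ring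
  have ha' : (π : ℂ) * (x - γ.im + I / p + I * γ.re) = a := by
    linear_combination (π : ℂ) * I * re_add_im γ - π * γ.im * I_sq
  have hb' : (π : ℂ) * (x + γ.im + I / p + I * γ.re) = b := by
    linear_combination (norm := (push_cast; ring))
      -(π : ℂ) * I * (add_conj γ + re_add_im γ) + π * γ.im * I_sq
  have hab : 2 * (π : ℂ) * γ.im = b - a := by rw [← ha', ← hb']; ring
  rw [ha', hb', hu, hab, neg_sub]
  exact one_add_mul_inv_sinh_mul_inv_sinh ha hb u

theorem symbol_factorization (p : ℝ) (hp : 1 < p) (γ : ℂ)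
    (h1 : 0 < 1 / p + γ.re) (h2 : 1 / p + γ.re < 1)
    (ω : ℝ → ℝ) (t : ℝ) (ht : 0 < t) (x : ℝ) (θ : ℝ) (hθ : θ ∈ Set.Icc (0:ℝ) 1) :
    1 + (1 / 4) * (Complex.exp (2 * (Real.pi : ℂ) * γ.im)
            * (1 - Complex.exp (-(Complex.I * (θ : ℂ) * (ω t : ℂ) * (x : ℂ))))
          + Complex.exp (-(2 * (Real.pi : ℂ) * γ.im))
            * (1 - Complex.exp (Complex.I * (θ : ℂ) * (ω t : ℂ) * (x : ℂ))))
        * (1 / Complex.sinh ((Real.pi : ℂ) * (x + Complex.I / p + Complex.I * γ)))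
        * (1 / Complex.sinh ((Real.pi : ℂ) * (x + Complex.I / p + Complex.I * (starRingEnd ℂ γ))))
    = (Complex.sinh ((Real.pi : ℂ) * ((x : ℂ) - (γ.im : ℂ) + Complex.I / p + Complex.I * γ.re)
          + Complex.I * (θ : ℂ) * (ω t : ℂ) * (x : ℂ) / 2)
        / Complex.sinh ((Real.pi : ℂ) * ((x : ℂ) - (γ.im : ℂ) + Complex.I / p + Complex.I * γ.re)))
      * (Complex.sinh ((Real.pi : ℂ) * ((x : ℂ) + (γ.im : ℂ) + Complex.I / p + Complex.I * γ.re)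
          - Complex.I * (θ : ℂ) * (ω t : ℂ) * (x : ℂ) / 2)
        / Complex.sinh ((Real.pi : ℂ) * ((x : ℂ) + (γ.im : ℂ) + Complex.I / p + Complex.I * γ.re))) :=
  symbol_factorization_general p γ h1 h2 ω t x θ
end
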